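/- (Main Theorem.) Let 𝒟 be a neighborhood closed collection of families of nonempty subsets of X. Then Φ has a 𝒟-pullback attractor 𝒜 in 𝒟 if and only if Φ is 𝒟-pullback asymptotically compact in X and Φ has a closed measurable 𝒟-pullback absorbing set K in 𝒟. In this case the 𝒟-pullback attractor is unique and is given, for each ω₁ ∈ Ω₁ and ω₂ ∈ Ω₂, by 𝒜(ω₁,ω₂) = Ω(K,ω₁,ω₂) = ⋃_{B∈𝒟} Ω(B,ω₁,ω₂) = { ψ(0,ω₁,ω₂) : ψ is a 𝒟-complete orbit of Φ }. -/

import Mathlib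

open MeasureTheory Filter Set Topology
open scoped ENNReal

namespace RDS

/-- A group of transformations of `α` parametrized by `ℝ`. -/
def IsGroupAction {α : Type*} (θ : ℝ → α → α) : Prop :=
  (∀ a, θ 0 a = a) ∧ ∀ s t : ℝ, ∀ a, θ (s + t) a = θ t (θ s a)

variable {Ω₁ Ω₂ X : Type*} [MetricSpace X] [MeasurableSpace X] [MeasurableSpace Ω₂]

/-- A continuous cocycle on `X` over the parametric dynamical systems
`(Ω₁, θ₁)` and `(Ω₂, ℱ₂, P, θ₂)` (Definition 2.1). -/
structure IsCocycle (θ₁ : ℝ → Ω₁ → Ω₁) (θ₂ : ℝ → Ω₂ → Ω₂)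
    (Φ : ℝ → Ω₁ → Ω₂ → X → X) : Prop where
  measurable : ∀ ω₁ : Ω₁,
    Measurable fun p : {t : ℝ // 0 ≤ t} × Ω₂ × X => Φ p.1.1 ω₁ p.2.1 p.2.2
  map_zero : ∀ (ω₁ : Ω₁) (ω₂ : Ω₂) (x : X), Φ 0 ω₁ ω₂ x = x
  cocycle : ∀ t τ : ℝ, 0 ≤ t → 0 ≤ τ → ∀ (ω₁ : Ω₁) (ω₂ : Ω₂) (x : X),
    Φ (t + τ) ω₁ ω₂ x = Φ t (θ₁ τ ω₁) (θ₂ τ ω₂) (Φ τ ω₁ ω₂ x)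
  continuous : ∀ t : ℝ, 0 ≤ t → ∀ (ω₁ : Ω₁) (ω₂ : Ω₂),
    Continuous fun x : X => Φ t ω₁ ω₂ x

/-- A complete orbit of the cocycle `Φ` (Definition 2.9). -/
def IsCompleteOrbit (θ₁ : ℝ → Ω₁ → Ω₁) (θ₂ : ℝ → Ω₂ → Ω₂)
    (Φ : ℝ → Ω₁ → Ω₂ → X → X) (ψ : ℝ → Ω₁ → Ω₂ → X) : Prop :=
  ∀ t τ : ℝ, 0 ≤ t → ∀ (ω₁ : Ω₁) (ω₂ : Ω₂),
    Φ t (θ₁ τ ω₁) (θ₂ τ ω₂) (ψ τ ω₁ ω₂) = ψ (t + τ) ω₁ ω₂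

/-- A `𝒟`-complete orbit of `Φ`. -/
def IsDCompleteOrbit (θ₁ : ℝ → Ω₁ → Ω₁) (θ₂ : ℝ → Ω₂ → Ω₂)
    (Φ : ℝ → Ω₁ → Ω₂ → X → X) (𝒟 : Set (Ω₁ → Ω₂ → Set X))
    (ψ : ℝ → Ω₁ → Ω₂ → X) : Prop :=
  IsCompleteOrbit θ₁ θ₂ Φ ψ ∧
    ∃ D ∈ 𝒟, ∀ (t : ℝ) (ω₁ : Ω₁) (ω₂ : Ω₂), ψ t ω₁ ω₂ ∈ D (θ₁ t ω₁) (θ₂ t ω₂)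

/-- Positive invariance of a family under `Φ`. -/
def PositivelyInvariant (θ₁ : ℝ → Ω₁ → Ω₁) (θ₂ : ℝ → Ω₂ → Ω₂)
    (Φ : ℝ → Ω₁ → Ω₂ → X → X) (B : Ω₁ → Ω₂ → Set X) : Prop :=
  ∀ t : ℝ, 0 ≤ t → ∀ (ω₁ : Ω₁) (ω₂ : Ω₂),
    Φ t ω₁ ω₂ '' B ω₁ ω₂ ⊆ B (θ₁ t ω₁) (θ₂ t ω₂)

/-- Invariance of a family under `Φ`. -/
def Invariant (θ₁ : ℝ → Ω₁ → Ω₁) (θ₂ : ℝ → Ω₂ → Ω₂)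
    (Φ : ℝ → Ω₁ → Ω₂ → X → X) (B : Ω₁ → Ω₂ → Set X) : Prop :=
  ∀ t : ℝ, 0 ≤ t → ∀ (ω₁ : Ω₁) (ω₂ : Ω₂),
    Φ t ω₁ ω₂ '' B ω₁ ω₂ = B (θ₁ t ω₁) (θ₂ t ω₂)

/-- Quasi-invariance of a family under `Φ`. -/
def QuasiInvariant (θ₁ : ℝ → Ω₁ → Ω₁) (θ₂ : ℝ → Ω₂ → Ω₂)
    (Φ : ℝ → Ω₁ → Ω₂ → X → X) (B : Ω₁ → Ω₂ → Set X) : Prop :=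
  ∀ y : Ω₁ → Ω₂ → X, (∀ (ω₁ : Ω₁) (ω₂ : Ω₂), y ω₁ ω₂ ∈ B ω₁ ω₂) →
    ∃ ψ : ℝ → Ω₁ → Ω₂ → X, IsCompleteOrbit θ₁ θ₂ Φ ψ ∧
      (∀ (ω₁ : Ω₁) (ω₂ : Ω₂), ψ 0 ω₁ ω₂ = y ω₁ ω₂) ∧
      ∀ (t : ℝ) (ω₁ : Ω₁) (ω₂ : Ω₂), ψ t ω₁ ω₂ ∈ B (θ₁ t ω₁) (θ₂ t ω₂)

/-- The Ω-limit set of a family `B` (Definition 2.13). -/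
def omegaLimit (θ₁ : ℝ → Ω₁ → Ω₁) (θ₂ : ℝ → Ω₂ → Ω₂)
    (Φ : ℝ → Ω₁ → Ω₂ → X → X) (B : Ω₁ → Ω₂ → Set X) (ω₁ : Ω₁) (ω₂ : Ω₂) : Set X :=
  ⋂ τ ∈ Ici (0 : ℝ), closure (⋃ t ∈ Ici τ,
    Φ t (θ₁ (-t) ω₁) (θ₂ (-t) ω₂) '' B (θ₁ (-t) ω₁) (θ₂ (-t) ω₂))

/-- `𝒟` is a collection of families of nonempty subsets of `X`. -/
def FamiliesOfNonemptySets (𝒟 : Set (Ω₁ → Ω₂ → Set X)) : Prop :=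
  ∀ D ∈ 𝒟, ∀ (ω₁ : Ω₁) (ω₂ : Ω₂), (D ω₁ ω₂).Nonempty

/-- Neighborhood closedness of the collection `𝒟` (Definition 2.5). -/
def NeighborhoodClosed (𝒟 : Set (Ω₁ → Ω₂ → Set X)) : Prop :=
  ∀ D ∈ 𝒟, ∃ ε : ℝ, 0 < ε ∧ ∀ B : Ω₁ → Ω₂ → Set X,
    (∀ (ω₁ : Ω₁) (ω₂ : Ω₂), (B ω₁ ω₂).Nonempty ∧
      B ω₁ ω₂ ⊆ Metric.thickening ε (D ω₁ ω₂)) → B ∈ 𝒟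

/-- Inclusion closedness of the collection `𝒟`. -/
def InclusionClosed (𝒟 : Set (Ω₁ → Ω₂ → Set X)) : Prop :=
  ∀ D ∈ 𝒟, ∀ B : Ω₁ → Ω₂ → Set X,
    (∀ (ω₁ : Ω₁) (ω₂ : Ω₂), (B ω₁ ω₂).Nonempty ∧ B ω₁ ω₂ ⊆ D ω₁ ω₂) → B ∈ 𝒟

/-- `𝒟`-pullback asymptotic compactness of `Φ` (Definition 2.16). -/
def AsymptoticallyCompact (θ₁ : ℝ → Ω₁ → Ω₁) (θ₂ : ℝ → Ω₂ → Ω₂)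
    (Φ : ℝ → Ω₁ → Ω₂ → X → X) (𝒟 : Set (Ω₁ → Ω₂ → Set X)) : Prop :=
  ∀ (ω₁ : Ω₁) (ω₂ : Ω₂), ∀ B ∈ 𝒟, ∀ (t : ℕ → ℝ) (x : ℕ → X),
    Tendsto t atTop atTop →
    (∀ n, x n ∈ B (θ₁ (-t n) ω₁) (θ₂ (-t n) ω₂)) →
    ∃ (φ : ℕ → ℕ) (y : X), StrictMono φ ∧
      Tendsto (fun n => Φ (t (φ n)) (θ₁ (-t (φ n)) ω₁) (θ₂ (-t (φ n)) ω₂) (x (φ n)))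
        atTop (𝓝 y)

/-- The Hausdorff semi-metric `d(C,B) = sup_{x ∈ C} inf_{b ∈ B} d(x,b)`,
valued in `ℝ≥0∞`. -/
noncomputable def hausSemidist (C B : Set X) : ℝ≥0∞ :=
  ⨆ x ∈ C, EMetric.infEdist x B

/-- The family `A` pullback attracts the family `B` under `Φ`. -/
def Attracts (θ₁ : ℝ → Ω₁ → Ω₁) (θ₂ : ℝ → Ω₂ → Ω₂)
    (Φ : ℝ → Ω₁ → Ω₂ → X → X) (B A : Ω₁ → Ω₂ → Set X) : Prop :=
  ∀ (ω₁ : Ω₁) (ω₂ : Ω₂),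
    Tendsto (fun t : ℝ => hausSemidist
        (Φ t (θ₁ (-t) ω₁) (θ₂ (-t) ω₂) '' B (θ₁ (-t) ω₁) (θ₂ (-t) ω₂)) (A ω₁ ω₂))
      atTop (𝓝 0)

/-- A `𝒟`-pullback absorbing set for `Φ` (Definition 2.15). -/
def IsAbsorbingSet (θ₁ : ℝ → Ω₁ → Ω₁) (θ₂ : ℝ → Ω₂ → Ω₂)
    (Φ : ℝ → Ω₁ → Ω₂ → X → X) (𝒟 : Set (Ω₁ → Ω₂ → Set X))
    (K : Ω₁ → Ω₂ → Set X) : Prop :=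
  K ∈ 𝒟 ∧ ∀ (ω₁ : Ω₁) (ω₂ : Ω₂), ∀ B ∈ 𝒟, ∃ T : ℝ, 0 < T ∧ ∀ t : ℝ, T ≤ t →
    Φ t (θ₁ (-t) ω₁) (θ₂ (-t) ω₂) '' B (θ₁ (-t) ω₁) (θ₂ (-t) ω₂) ⊆ K ω₁ ω₂

/-- A closed measurable (w.r.t. the `P`-completion of `ℱ₂`) `𝒟`-pullback
absorbing set for `Φ`. -/
def IsClosedMeasurableAbsorbingSet (θ₁ : ℝ → Ω₁ → Ω₁) (θ₂ : ℝ → Ω₂ → Ω₂)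
    (Φ : ℝ → Ω₁ → Ω₂ → X → X) (P : Measure Ω₂) (𝒟 : Set (Ω₁ → Ω₂ → Set X))
    (K : Ω₁ → Ω₂ → Set X) : Prop :=
  IsAbsorbingSet θ₁ θ₂ Φ 𝒟 K ∧
    (∀ (ω₁ : Ω₁) (ω₂ : Ω₂), IsClosed (K ω₁ ω₂) ∧ (K ω₁ ω₂).Nonempty) ∧
    ∀ (ω₁ : Ω₁) (x : X), NullMeasurable (fun ω₂ => Metric.infDist x (K ω₁ ω₂)) P

/-- A `𝒟`-pullback attractor for `Φ` (Definition 2.17). -/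
structure IsPullbackAttractor (θ₁ : ℝ → Ω₁ → Ω₁) (θ₂ : ℝ → Ω₂ → Ω₂)
    (Φ : ℝ → Ω₁ → Ω₂ → X → X) (P : Measure Ω₂) (𝒟 : Set (Ω₁ → Ω₂ → Set X))
    (A : Ω₁ → Ω₂ → Set X) : Prop where
  mem : A ∈ 𝒟
  compact : ∀ (ω₁ : Ω₁) (ω₂ : Ω₂), IsCompact (A ω₁ ω₂)
  measurable : ∀ (ω₁ : Ω₁) (x : X),
    NullMeasurable (fun ω₂ => Metric.infDist x (A ω₁ ω₂)) P
  invariant : Invariant θ₁ θ₂ Φ A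
  attracts : ∀ B ∈ 𝒟, Attracts θ₁ θ₂ Φ B A

end RDS

/-
The attractor is the Ω-limit set of the absorbing family `K`. Asymptotic compactness makes
Ω-limit sets of families in `𝒟` nonempty, compact and invariant (continuity of the cocycle pushes
limits of pullback sequences forward, asymptotic compactness pulls them back), and `Ω(K)` attracts
every `B ∈ 𝒟` because absorption gives `Ω(B) ⊆ Ω(K)`. For measurability, `K` is first replaced by
the closure of `s ∩ thickening η K` for a countable dense `s`, still in `𝒟` by neighbourhood
closedness: distances to pullback images of this family are countable infima of measurable
functions, and by invariance and attraction they converge to distances to the attractor.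
Conversely, an attractor is compact and attracts, which gives asymptotic compactness, and the same
enlargement of the attractor is a closed measurable absorbing set. An attractor contains `ψ 0`
for every `𝒟`-complete orbit `ψ`, since `ψ 0` lies in every pullback image of the family carrying
`ψ`; through every point of an invariant family passes a complete orbit, built by choosing
preimages backwards along integer times.
-/

namespace RDS

open Metric

variable {Ω₁ Ω₂ X : Type*}

theorem IsGroupAction.apply_apply_eq {α : Type*} {θ : ℝ → α → α} (h : IsGroupAction θ)
    {s t u : ℝ} (hu : s + t = u) (a : α) : θ t (θ s a) = θ u a := by
  rw [← h.2, hu]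

theorem IsGroupAction.apply_neg_apply {α : Type*} {θ : ℝ → α → α} (h : IsGroupAction θ)
    (t : ℝ) (a : α) : θ t (θ (-t) a) = a := by
  rw [h.apply_apply_eq (neg_add_cancel t), h.1]

section Distance

variable [MetricSpace X] {s S : Set X} {η : ℝ}

theorem le_hausSemidist {C D : Set X} {z : X} (hz : z ∈ C) :
    infEDist z D ≤ hausSemidist C D :=
  le_iSup₂ (f := fun x (_ : x ∈ C) => infEDist x D) z hz

theorem infEDist_le_infEDist_add_hausSemidist (C D : Set X) (x : X) :
    infEDist x D ≤ infEDist x C + hausSemidist C D := by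
  change _ ≤ (⨅ z ∈ C, edist x z) + _
  simp only [ENNReal.iInf_add, le_iInf_iff]
  exact fun z hz => infEDist_le_edist_add_infEDist.trans (add_le_add_right (le_hausSemidist hz) _)

theorem tendsto_infEDist_of_tendsto_hausSemidist {ι : Type*} {l : Filter ι} {C : ι → Set X}
    {D : Set X} (hsub : ∀ i, D ⊆ C i) (hCD : Tendsto (fun i => hausSemidist (C i) D) l (𝓝 0))
    (x : X) : Tendsto (fun i => infEDist x (C i)) l (𝓝 (infEDist x D)) := by
  have hlow : Tendsto (fun i => infEDist x D - hausSemidist (C i) D) l (𝓝 (infEDist x D)) := by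
    simpa using ENNReal.Tendsto.sub tendsto_const_nhds hCD (Or.inr ENNReal.zero_ne_top)
  exact tendsto_of_tendsto_of_tendsto_of_le_of_le hlow tendsto_const_nhds
    (fun i => tsub_le_iff_right.2 (infEDist_le_infEDist_add_hausSemidist _ _ x))
    (fun i => infEDist_anti (hsub i))

theorem exists_subseq_tendsto_of_infEDist_tendsto_zero {C : Set X} (hC : IsCompact C)
    {z : ℕ → X} (hz : Tendsto (fun n => infEDist (z n) C) atTop (𝓝 0)) :
    ∃ a ∈ C, ∃ φ : ℕ → ℕ, StrictMono φ ∧ Tendsto (z ∘ φ) atTop (𝓝 a) := by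
  obtain rfl | hne := C.eq_empty_or_nonempty
  · simp at hz
  choose y hy hyz using fun n => hC.exists_infEDist_eq_edist hne (z n)
  obtain ⟨a, ha, φ, hφ, hconv⟩ := hC.tendsto_subseq hy
  have hdist : Tendsto (fun n => dist (y n) (z n)) atTop (𝓝 0) := by
    simpa only [Function.comp_def, hyz, ENNReal.toReal_zero, dist_edist, edist_comm] using
      (ENNReal.tendsto_toReal ENNReal.zero_ne_top).comp hz
  exact ⟨a, ha, φ, hφ, tendsto_of_tendsto_of_dist hconv (hdist.comp hφ.tendsto_atTop)⟩

theorem infEDist_image_closure {Y : Type*} [PseudoEMetricSpace Y] {f : X → Y}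
    (hf : Continuous f) (x : Y) (T : Set X) :
    infEDist x (f '' closure T) = infEDist x (f '' T) :=
  le_antisymm (infEDist_anti (image_mono subset_closure))
    (infEDist_closure (x := x) (s := f '' T) ▸
      infEDist_anti (image_closure_subset_closure_image hf))

theorem _root_.Dense.thickening_subset_closure_inter (hs : Dense s) :
    thickening η S ⊆ closure (s ∩ thickening η S) := by
  rw [inter_comm]
  exact hs.open_subset_closure_inter isOpen_thickening

theorem nullMeasurable_infEDist_image_closure_inter_thickening [MeasurableSpace X]
    [OpensMeasurableSpace X] {Ω : Type*} [MeasurableSpace Ω] {P : Measure Ω} (hs : s.Countable)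
    {S : Ω → Set X} (hS : ∀ ω, (S ω).Nonempty)
    (hSm : ∀ u ∈ s, NullMeasurable (fun ω => infDist u (S ω)) P) {f : Ω → X → X}
    (hf : ∀ ω, Continuous (f ω)) (hfm : ∀ u ∈ s, NullMeasurable (fun ω => f ω u) P) (x : X) :
    NullMeasurable (fun ω => infEDist x (f ω '' closure (s ∩ thickening η (S ω)))) P := by
  classical
  simp_rw [infEDist_image_closure (hf _), infEDist, iInf_image, mem_inter_iff, iInf_and,
    mem_thickening_iff_infDist_lt (hS _)]
  -- `NullMeasurable` is measurability for the σ-algebra of `NullMeasurableSpace Ω P`.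
  have : @Measurable (NullMeasurableSpace Ω P) _ _ _
      fun ω => ⨅ u ∈ s, ⨅ (_ : infDist u (S ω) < η), edist x (f ω u) :=
    Measurable.biInf s hs fun u hu => by
      simp_rw [iInf_eq_if]
      exact Measurable.ite (hSm u hu measurableSet_Iio)
        (measurable_edist_right.comp_nullMeasurable (hfm u hu)).measurable' measurable_const
  exact this

end Distance

section DenseThickening

variable [MetricSpace X] {s : Set X} {η : ℝ}

def denseThickening (s : Set X) (η : ℝ) (K : Ω₁ → Ω₂ → Set X) (ω₁ : Ω₁) (ω₂ : Ω₂) : Set X :=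
  closure (s ∩ thickening η (K ω₁ ω₂))

theorem cthickening_subset_denseThickening (hs : Dense s) {δ : ℝ} (hδ : 0 ≤ δ) (hδη : δ < η)
    (K : Ω₁ → Ω₂ → Set X) (ω₁ : Ω₁) (ω₂ : Ω₂) :
    cthickening δ (K ω₁ ω₂) ⊆ denseThickening s η K ω₁ ω₂ :=
  (cthickening_subset_thickening' (hδ.trans_lt hδη) hδη _).trans
    hs.thickening_subset_closure_inter

theorem subset_denseThickening (hs : Dense s) (hη : 0 < η) (K : Ω₁ → Ω₂ → Set X) (ω₁ : Ω₁)
    (ω₂ : Ω₂) : K ω₁ ω₂ ⊆ denseThickening s η K ω₁ ω₂ :=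
  (self_subset_cthickening _).trans (cthickening_subset_denseThickening hs le_rfl hη K ω₁ ω₂)

theorem NeighborhoodClosed.exists_denseThickening_mem {𝒟 : Set (Ω₁ → Ω₂ → Set X)}
    (h𝒟 : NeighborhoodClosed 𝒟) {K : Ω₁ → Ω₂ → Set X} (hK : K ∈ 𝒟) (s : Set X) :
    ∃ η > 0, ∀ B : Ω₁ → Ω₂ → Set X,
      (∀ a b, (B a b).Nonempty ∧ B a b ⊆ denseThickening s η K a b) → B ∈ 𝒟 := by
  obtain ⟨ε, hε, h⟩ := h𝒟 K hK
  refine ⟨ε / 2, half_pos hε, fun B hB => h B fun a b => ⟨(hB a b).1, (hB a b).2.trans ?_⟩⟩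
  exact (closure_mono inter_subset_right).trans <| (closure_thickening_subset_cthickening _ _).trans
    (cthickening_subset_thickening' hε (half_lt_self hε) _)

end DenseThickening

section PullbackImage

def pullbackImage (θ₁ : ℝ → Ω₁ → Ω₁) (θ₂ : ℝ → Ω₂ → Ω₂) (Φ : ℝ → Ω₁ → Ω₂ → X → X)
    (B : Ω₁ → Ω₂ → Set X) (t : ℝ) (ω₁ : Ω₁) (ω₂ : Ω₂) : Set X :=
  Φ t (θ₁ (-t) ω₁) (θ₂ (-t) ω₂) '' B (θ₁ (-t) ω₁) (θ₂ (-t) ω₂)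

variable {θ₁ : ℝ → Ω₁ → Ω₁} {θ₂ : ℝ → Ω₂ → Ω₂} {Φ : ℝ → Ω₁ → Ω₂ → X → X}
  {𝒟 : Set (Ω₁ → Ω₂ → Set X)} {A B K : Ω₁ → Ω₂ → Set X} {ω₁ : Ω₁} {ω₂ : Ω₂}

theorem Invariant.pullbackImage_eq (hθ₁ : IsGroupAction θ₁) (hθ₂ : IsGroupAction θ₂)
    (hA : Invariant θ₁ θ₂ Φ A) {t : ℝ} (ht : 0 ≤ t) (ω₁ : Ω₁) (ω₂ : Ω₂) :
    pullbackImage θ₁ θ₂ Φ A t ω₁ ω₂ = A ω₁ ω₂ := by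
  rw [pullbackImage, hA t ht, hθ₁.apply_neg_apply, hθ₂.apply_neg_apply]

theorem IsAbsorbingSet.eventually_subset (hK : IsAbsorbingSet θ₁ θ₂ Φ 𝒟 K) (hB : B ∈ 𝒟)
    (ω₁ : Ω₁) (ω₂ : Ω₂) : ∀ᶠ t in atTop, pullbackImage θ₁ θ₂ Φ B t ω₁ ω₂ ⊆ K ω₁ ω₂ :=
  let ⟨T, _, hT⟩ := hK.2 ω₁ ω₂ B hB
  eventually_atTop.2 ⟨T, hT⟩

variable [MetricSpace X] {y : X}

theorem mem_omegaLimit_iff : y ∈ omegaLimit θ₁ θ₂ Φ B ω₁ ω₂ ↔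
    ∀ τ, 0 ≤ τ → y ∈ closure (⋃ t ∈ Ici τ, pullbackImage θ₁ θ₂ Φ B t ω₁ ω₂) :=
  mem_iInter₂

theorem subset_omegaLimit_of_forall_subset {C : Set X}
    (h : ∀ t, 0 ≤ t → C ⊆ pullbackImage θ₁ θ₂ Φ B t ω₁ ω₂) :
    C ⊆ omegaLimit θ₁ θ₂ Φ B ω₁ ω₂ := fun _ hy =>
  mem_omegaLimit_iff.2 fun τ hτ => subset_closure (mem_biUnion self_mem_Ici (h τ hτ hy))

theorem Invariant.subset_omegaLimit (hθ₁ : IsGroupAction θ₁) (hθ₂ : IsGroupAction θ₂)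
    (hA : Invariant θ₁ θ₂ Φ A) : A ω₁ ω₂ ⊆ omegaLimit θ₁ θ₂ Φ A ω₁ ω₂ :=
  subset_omegaLimit_of_forall_subset fun _ ht => (hA.pullbackImage_eq hθ₁ hθ₂ ht ω₁ ω₂).ge

theorem omegaLimit_subset_of_eventually_subset {C : Set X} (hC : IsClosed C)
    (h : ∀ᶠ t in atTop, pullbackImage θ₁ θ₂ Φ B t ω₁ ω₂ ⊆ C) :
    omegaLimit θ₁ θ₂ Φ B ω₁ ω₂ ⊆ C := fun _ hy => by
  obtain ⟨T, hT⟩ := eventually_atTop.1 h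
  refine hC.closure_subset_iff.2 ?_ (mem_omegaLimit_iff.1 hy (max T 0) (le_max_right _ _))
  exact iUnion₂_subset fun t ht => hT t (le_of_max_le_left ht)

theorem mem_omegaLimit_of_tendsto {t : ℕ → ℝ} {x : ℕ → X} (ht : Tendsto t atTop atTop)
    (hx : ∀ n, x n ∈ B (θ₁ (-t n) ω₁) (θ₂ (-t n) ω₂))
    (hy : Tendsto (fun n => Φ (t n) (θ₁ (-t n) ω₁) (θ₂ (-t n) ω₂) (x n)) atTop (𝓝 y)) :
    y ∈ omegaLimit θ₁ θ₂ Φ B ω₁ ω₂ :=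
  mem_omegaLimit_iff.2 fun τ _ => mem_closure_of_tendsto hy <|
    (ht.eventually_ge_atTop τ).mono fun n hn => mem_biUnion hn (mem_image_of_mem _ (hx n))

theorem exists_seq_near_of_forall_mem_omegaLimit {y : ℕ → X}
    (hy : ∀ n, y n ∈ omegaLimit θ₁ θ₂ Φ B ω₁ ω₂) :
    ∃ (t : ℕ → ℝ) (x : ℕ → X), Tendsto t atTop atTop ∧
      (∀ n, x n ∈ B (θ₁ (-t n) ω₁) (θ₂ (-t n) ω₂)) ∧
      Tendsto (fun n => dist (Φ (t n) (θ₁ (-t n) ω₁) (θ₂ (-t n) ω₂) (x n)) (y n))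
        atTop (𝓝 0) := by
  have near : ∀ n : ℕ, ∃ t, (n : ℝ) ≤ t ∧ ∃ x ∈ B (θ₁ (-t) ω₁) (θ₂ (-t) ω₂),
      dist (Φ t (θ₁ (-t) ω₁) (θ₂ (-t) ω₂) x) (y n) < 1 / (n + 1) := fun n => by
    obtain ⟨_, hz, hzy⟩ := Metric.mem_closure_iff.1
      (mem_omegaLimit_iff.1 (hy n) n n.cast_nonneg) _ Nat.one_div_pos_of_nat
    obtain ⟨t, ht, x, hx, rfl⟩ := mem_iUnion₂.1 hz
    exact ⟨t, ht, x, hx, by rwa [dist_comm]⟩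
  choose t ht x hx hdist using near
  exact ⟨t, x, tendsto_atTop_mono ht tendsto_natCast_atTop_atTop, hx,
    squeeze_zero (fun _ => dist_nonneg) (fun n => (hdist n).le)
      tendsto_one_div_add_atTop_nhds_zero_nat⟩

theorem exists_seq_tendsto_of_mem_omegaLimit (hy : y ∈ omegaLimit θ₁ θ₂ Φ B ω₁ ω₂) :
    ∃ (t : ℕ → ℝ) (x : ℕ → X), Tendsto t atTop atTop ∧
      (∀ n, x n ∈ B (θ₁ (-t n) ω₁) (θ₂ (-t n) ω₂)) ∧
      Tendsto (fun n => Φ (t n) (θ₁ (-t n) ω₁) (θ₂ (-t n) ω₂) (x n)) atTop (𝓝 y) := by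
  obtain ⟨t, x, ht, hx, hdist⟩ := exists_seq_near_of_forall_mem_omegaLimit fun _ => hy
  exact ⟨t, x, ht, hx, tendsto_iff_dist_tendsto_zero.2 hdist⟩

theorem AsymptoticallyCompact.exists_tendsto_mem_omegaLimit
    (hAC : AsymptoticallyCompact θ₁ θ₂ Φ 𝒟) (hB : B ∈ 𝒟) {t : ℕ → ℝ} {x : ℕ → X}
    (ht : Tendsto t atTop atTop) (hx : ∀ n, x n ∈ B (θ₁ (-t n) ω₁) (θ₂ (-t n) ω₂)) :
    ∃ (φ : ℕ → ℕ) (y : X), StrictMono φ ∧ y ∈ omegaLimit θ₁ θ₂ Φ B ω₁ ω₂ ∧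
      Tendsto (fun n => Φ (t (φ n)) (θ₁ (-t (φ n)) ω₁) (θ₂ (-t (φ n)) ω₂) (x (φ n)))
        atTop (𝓝 y) := by
  obtain ⟨φ, y, hφ, hy⟩ := hAC ω₁ ω₂ B hB t x ht hx
  exact ⟨φ, y, hφ, mem_omegaLimit_of_tendsto (ht.comp hφ.tendsto_atTop) (fun n => hx (φ n)) hy,
    hy⟩

theorem AsymptoticallyCompact.isCompact_omegaLimit (hAC : AsymptoticallyCompact θ₁ θ₂ Φ 𝒟)
    (hB : B ∈ 𝒟) : IsCompact (omegaLimit θ₁ θ₂ Φ B ω₁ ω₂) := by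
  refine isCompact_iff_isSeqCompact.2 fun y hy => ?_
  obtain ⟨t, x, ht, hx, hdist⟩ := exists_seq_near_of_forall_mem_omegaLimit hy
  obtain ⟨φ, a, hφ, ha, hconv⟩ := hAC.exists_tendsto_mem_omegaLimit hB ht hx
  exact ⟨a, ha, φ, hφ, tendsto_of_tendsto_of_dist hconv (hdist.comp hφ.tendsto_atTop)⟩

theorem AsymptoticallyCompact.omegaLimit_nonempty (hAC : AsymptoticallyCompact θ₁ θ₂ Φ 𝒟)
    (h𝒟ne : FamiliesOfNonemptySets 𝒟) (hB : B ∈ 𝒟) :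
    (omegaLimit θ₁ θ₂ Φ B ω₁ ω₂).Nonempty := by
  choose x hx using fun n : ℕ => h𝒟ne B hB (θ₁ (-n) ω₁) (θ₂ (-n) ω₂)
  obtain ⟨_, y, -, hy, -⟩ := hAC.exists_tendsto_mem_omegaLimit hB tendsto_natCast_atTop_atTop hx
  exact ⟨y, hy⟩

theorem Attracts.eventually_subset_cthickening (h : Attracts θ₁ θ₂ Φ B A) {δ : ℝ}
    (hδ : 0 < δ) : ∀ᶠ t in atTop, pullbackImage θ₁ θ₂ Φ B t ω₁ ω₂ ⊆ cthickening δ (A ω₁ ω₂) :=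
  (ENNReal.tendsto_nhds_zero.1 (h ω₁ ω₂) _ (ENNReal.ofReal_pos.2 hδ)).mono fun _ ht _ hz =>
    mem_cthickening_iff.2 ((le_hausSemidist hz).trans ht)

theorem Attracts.omegaLimit_subset (h : Attracts θ₁ θ₂ Φ B A) (hA : IsClosed (A ω₁ ω₂)) :
    omegaLimit θ₁ θ₂ Φ B ω₁ ω₂ ⊆ A ω₁ ω₂ := by
  rw [← hA.closure_eq, closure_eq_iInter_cthickening]
  exact subset_iInter₂ fun δ hδ =>
    omegaLimit_subset_of_eventually_subset isClosed_cthickening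
      (h.eventually_subset_cthickening hδ)

theorem tendsto_hausSemidist_of_exists_subseq {C : Set X}
    (h : ∀ (t : ℕ → ℝ) (x : ℕ → X), Tendsto t atTop atTop →
      (∀ n, x n ∈ B (θ₁ (-t n) ω₁) (θ₂ (-t n) ω₂)) →
      ∃ (φ : ℕ → ℕ) (y : X), StrictMono φ ∧ y ∈ C ∧
        Tendsto (fun n => Φ (t (φ n)) (θ₁ (-t (φ n)) ω₁) (θ₂ (-t (φ n)) ω₂) (x (φ n)))
          atTop (𝓝 y)) :
    Tendsto (fun t => hausSemidist (pullbackImage θ₁ θ₂ Φ B t ω₁ ω₂) C) atTop (𝓝 0) := by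
  refine ENNReal.tendsto_nhds_zero.2 fun ε hε => ?_
  by_contra hfreq
  have far : ∀ n : ℕ, ∃ t, (n : ℝ) ≤ t ∧ ∃ x ∈ B (θ₁ (-t) ω₁) (θ₂ (-t) ω₂),
      ε < infEDist (Φ t (θ₁ (-t) ω₁) (θ₂ (-t) ω₂) x) C := fun n => by
    obtain ⟨t, ht, hlt⟩ := frequently_atTop.1 (not_eventually.1 hfreq) n
    obtain ⟨_, ⟨x, hx, rfl⟩, hz⟩ := lt_biSup_iff.1 (not_le.1 hlt)
    exact ⟨t, ht, x, hx, hz⟩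
  choose t ht x hx hfar using far
  obtain ⟨φ, y, -, hy, hconv⟩ :=
    h t x (tendsto_atTop_mono ht tendsto_natCast_atTop_atTop) hx
  have : ε ≤ infEDist y C := ge_of_tendsto ((continuous_infEDist.tendsto y).comp hconv)
    (Eventually.of_forall fun n => (hfar (φ n)).le)
  exact (infEDist_zero_of_mem hy ▸ this).not_gt hε

end PullbackImage

section Cocycle

variable [MetricSpace X] [MeasurableSpace X] [MeasurableSpace Ω₂]
  {θ₁ : ℝ → Ω₁ → Ω₁} {θ₂ : ℝ → Ω₂ → Ω₂} {Φ : ℝ → Ω₁ → Ω₂ → X → X}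
  {𝒟 : Set (Ω₁ → Ω₂ → Set X)} {A B K : Ω₁ → Ω₂ → Set X} {ω₁ : Ω₁} {ω₂ : Ω₂}

theorem IsCocycle.measurable_apply (hΦ : IsCocycle θ₁ θ₂ Φ) {t : ℝ} (ht : 0 ≤ t) (ω₁ : Ω₁)
    (x : X) : Measurable fun ω₂ => Φ t ω₁ ω₂ x :=
  (hΦ.measurable ω₁).comp ((measurable_const (a := (⟨t, ht⟩ : {t : ℝ // 0 ≤ t}))).prodMk
    (measurable_id.prodMk measurable_const))

theorem IsCocycle.apply_pullback (hθ₁ : IsGroupAction θ₁) (hθ₂ : IsGroupAction θ₂)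
    (hΦ : IsCocycle θ₁ θ₂ Φ) {t s : ℝ} (ht : 0 ≤ t) (hs : 0 ≤ s) (ω₁ : Ω₁) (ω₂ : Ω₂) (x : X) :
    Φ t ω₁ ω₂ (Φ s (θ₁ (-s) ω₁) (θ₂ (-s) ω₂) x) =
      Φ (t + s) (θ₁ (-(t + s)) (θ₁ t ω₁)) (θ₂ (-(t + s)) (θ₂ t ω₂)) x := by
  rw [hθ₁.apply_apply_eq (show t + -(t + s) = -s by ring),
    hθ₂.apply_apply_eq (show t + -(t + s) = -s by ring), hΦ.cocycle t s ht hs,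
    hθ₁.apply_neg_apply, hθ₂.apply_neg_apply]

theorem IsCocycle.pullbackImage_add (hθ₁ : IsGroupAction θ₁) (hθ₂ : IsGroupAction θ₂)
    (hΦ : IsCocycle θ₁ θ₂ Φ) (B : Ω₁ → Ω₂ → Set X) {τ s : ℝ} (hτ : 0 ≤ τ) (hs : 0 ≤ s)
    (ω₁ : Ω₁) (ω₂ : Ω₂) :
    pullbackImage θ₁ θ₂ Φ B (τ + s) ω₁ ω₂ = Φ τ (θ₁ (-τ) ω₁) (θ₂ (-τ) ω₂) ''
      pullbackImage θ₁ θ₂ Φ B s (θ₁ (-τ) ω₁) (θ₂ (-τ) ω₂) := by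
  have h := hΦ.apply_pullback hθ₁ hθ₂ hτ hs (θ₁ (-τ) ω₁) (θ₂ (-τ) ω₂)
  simp only [hθ₁.apply_neg_apply, hθ₂.apply_neg_apply, hθ₁.apply_apply_eq (neg_add τ s).symm,
    hθ₂.apply_apply_eq (neg_add τ s).symm] at h
  simp only [pullbackImage, image_image, hθ₁.apply_apply_eq (neg_add τ s).symm,
    hθ₂.apply_apply_eq (neg_add τ s).symm, h]

theorem IsCocycle.pullbackImage_add_subset (hθ₁ : IsGroupAction θ₁) (hθ₂ : IsGroupAction θ₂)
    (hΦ : IsCocycle θ₁ θ₂ Φ) {τ s : ℝ} (hτ : 0 ≤ τ) (hs : 0 ≤ s)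
    (h : pullbackImage θ₁ θ₂ Φ B s (θ₁ (-τ) ω₁) (θ₂ (-τ) ω₂) ⊆ K (θ₁ (-τ) ω₁) (θ₂ (-τ) ω₂)) :
    pullbackImage θ₁ θ₂ Φ B (τ + s) ω₁ ω₂ ⊆ pullbackImage θ₁ θ₂ Φ K τ ω₁ ω₂ := by
  rw [hΦ.pullbackImage_add hθ₁ hθ₂ B hτ hs]
  exact image_mono h

theorem IsAbsorbingSet.omegaLimit_subset_omegaLimit (hθ₁ : IsGroupAction θ₁)
    (hθ₂ : IsGroupAction θ₂) (hΦ : IsCocycle θ₁ θ₂ Φ) (hK : IsAbsorbingSet θ₁ θ₂ Φ 𝒟 K)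
    (hB : B ∈ 𝒟) : omegaLimit θ₁ θ₂ Φ B ω₁ ω₂ ⊆ omegaLimit θ₁ θ₂ Φ K ω₁ ω₂ := fun y hy => by
  refine mem_omegaLimit_iff.2 fun τ hτ =>
    omegaLimit_subset_of_eventually_subset isClosed_closure ?_ hy
  -- `K` absorbs `B` at the fibre reached at time `-τ`; push that forward by time `τ`.
  have habs := (tendsto_atTop_add_const_right atTop (-τ) tendsto_id).eventually
    (hK.eventually_subset hB (θ₁ (-τ) ω₁) (θ₂ (-τ) ω₂))
  filter_upwards [habs, eventually_ge_atTop τ] with t ht hτt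
  have hsub := hΦ.pullbackImage_add_subset hθ₁ hθ₂ hτ (by simpa [← sub_eq_add_neg] using hτt) ht
  rw [add_add_neg_cancel'_right] at hsub
  exact hsub.trans fun z hz => subset_closure (mem_biUnion self_mem_Ici hz)

theorem Invariant.subset_omegaLimit_of_absorbing (hθ₁ : IsGroupAction θ₁)
    (hθ₂ : IsGroupAction θ₂) (hΦ : IsCocycle θ₁ θ₂ Φ) (hA : Invariant θ₁ θ₂ Φ A) (hA𝒟 : A ∈ 𝒟)
    (hK : IsAbsorbingSet θ₁ θ₂ Φ 𝒟 K) : A ω₁ ω₂ ⊆ omegaLimit θ₁ θ₂ Φ K ω₁ ω₂ :=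
  subset_omegaLimit_of_forall_subset fun τ hτ => by
    obtain ⟨T, hT, habs⟩ := hK.2 (θ₁ (-τ) ω₁) (θ₂ (-τ) ω₂) A hA𝒟
    rw [← hA.pullbackImage_eq hθ₁ hθ₂ (add_nonneg hτ hT.le)]
    exact hΦ.pullbackImage_add_subset hθ₁ hθ₂ hτ hT.le (habs T le_rfl)

theorem IsCocycle.image_omegaLimit_subset (hθ₁ : IsGroupAction θ₁) (hθ₂ : IsGroupAction θ₂)
    (hΦ : IsCocycle θ₁ θ₂ Φ) {t : ℝ} (ht : 0 ≤ t) :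
    Φ t ω₁ ω₂ '' omegaLimit θ₁ θ₂ Φ B ω₁ ω₂ ⊆ omegaLimit θ₁ θ₂ Φ B (θ₁ t ω₁) (θ₂ t ω₂) := by
  rintro _ ⟨y, hy, rfl⟩
  obtain ⟨s, x, hs, hx, hconv⟩ := exists_seq_tendsto_of_mem_omegaLimit hy
  refine mem_omegaLimit_of_tendsto (x := x) (tendsto_atTop_add_const_left _ t hs) (fun n => ?_) ?_
  · rw [hθ₁.apply_apply_eq (show t + -(t + s n) = -s n by ring),
      hθ₂.apply_apply_eq (show t + -(t + s n) = -s n by ring)]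
    exact hx n
  · refine (((hΦ.continuous t ht ω₁ ω₂).tendsto y).comp hconv).congr' ?_
    filter_upwards [hs.eventually_ge_atTop 0] with n hn
    exact hΦ.apply_pullback hθ₁ hθ₂ ht hn ω₁ ω₂ (x n)

theorem IsCocycle.omegaLimit_subset_image_omegaLimit (hθ₁ : IsGroupAction θ₁)
    (hθ₂ : IsGroupAction θ₂) (hΦ : IsCocycle θ₁ θ₂ Φ) (hAC : AsymptoticallyCompact θ₁ θ₂ Φ 𝒟)
    (hB : B ∈ 𝒟) {t : ℝ} (ht : 0 ≤ t) :
    omegaLimit θ₁ θ₂ Φ B (θ₁ t ω₁) (θ₂ t ω₂) ⊆ Φ t ω₁ ω₂ '' omegaLimit θ₁ θ₂ Φ B ω₁ ω₂ := by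
  intro y hy
  obtain ⟨s, x, hs, hx, hconv⟩ := exists_seq_tendsto_of_mem_omegaLimit hy
  have hx' : ∀ n, x n ∈ B (θ₁ (-(s n + -t)) ω₁) (θ₂ (-(s n + -t)) ω₂) := fun n => by
    rw [← hθ₁.apply_apply_eq (show t + -s n = -(s n + -t) by ring),
      ← hθ₂.apply_apply_eq (show t + -s n = -(s n + -t) by ring)]
    exact hx n
  obtain ⟨φ, z, hφ, hz, hzconv⟩ :=
    hAC.exists_tendsto_mem_omegaLimit hB (tendsto_atTop_add_const_right _ (-t) hs) hx'
  refine ⟨z, hz, tendsto_nhds_unique (((hΦ.continuous t ht ω₁ ω₂).tendsto z).comp hzconv) ?_⟩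
  refine (hconv.comp hφ.tendsto_atTop).congr' ?_
  filter_upwards [(hs.comp hφ.tendsto_atTop).eventually_ge_atTop t] with n hn
  have h := hΦ.apply_pullback hθ₁ hθ₂ ht (s := s (φ n) + -t)
    (by simp only [Function.comp_apply] at hn; linarith) ω₁ ω₂ (x (φ n))
  rw [add_add_neg_cancel'_right] at h
  exact h.symm

theorem AsymptoticallyCompact.invariant_omegaLimit (hAC : AsymptoticallyCompact θ₁ θ₂ Φ 𝒟)
    (hθ₁ : IsGroupAction θ₁) (hθ₂ : IsGroupAction θ₂) (hΦ : IsCocycle θ₁ θ₂ Φ) (hB : B ∈ 𝒟) :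
    Invariant θ₁ θ₂ Φ (omegaLimit θ₁ θ₂ Φ B) := fun _ ht _ _ =>
  (hΦ.image_omegaLimit_subset hθ₁ hθ₂ ht).antisymm
    (hΦ.omegaLimit_subset_image_omegaLimit hθ₁ hθ₂ hAC hB ht)

theorem AsymptoticallyCompact.attracts_omegaLimit (hAC : AsymptoticallyCompact θ₁ θ₂ Φ 𝒟)
    (hθ₁ : IsGroupAction θ₁) (hθ₂ : IsGroupAction θ₂) (hΦ : IsCocycle θ₁ θ₂ Φ)
    (hK : IsAbsorbingSet θ₁ θ₂ Φ 𝒟 K) (hB : B ∈ 𝒟) :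
    Attracts θ₁ θ₂ Φ B (omegaLimit θ₁ θ₂ Φ K) := fun _ _ =>
  tendsto_hausSemidist_of_exists_subseq fun _ _ ht hx =>
    let ⟨φ, y, hφ, hy, hconv⟩ := hAC.exists_tendsto_mem_omegaLimit hB ht hx
    ⟨φ, y, hφ, hK.omegaLimit_subset_omegaLimit hθ₁ hθ₂ hΦ hB hy, hconv⟩

theorem Invariant.exists_backward_seq (hθ₁ : IsGroupAction θ₁) (hθ₂ : IsGroupAction θ₂)
    (hΦ : IsCocycle θ₁ θ₂ Φ) (hA : Invariant θ₁ θ₂ Φ A) {y : X} (hy : y ∈ A ω₁ ω₂) :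
    ∃ z : ℕ → X, z 0 = y ∧ (∀ n : ℕ, z n ∈ A (θ₁ (-n) ω₁) (θ₂ (-n) ω₂)) ∧
      ∀ n k : ℕ, Φ k (θ₁ (-(n + k : ℕ)) ω₁) (θ₂ (-(n + k : ℕ)) ω₂) (z (n + k)) = z n := by
  have step : ∀ (n : ℕ) (w : X), w ∈ A (θ₁ (-n) ω₁) (θ₂ (-n) ω₂) →
      ∃ w' ∈ A (θ₁ (-(n + 1 : ℕ)) ω₁) (θ₂ (-(n + 1 : ℕ)) ω₂),
        Φ 1 (θ₁ (-(n + 1 : ℕ)) ω₁) (θ₂ (-(n + 1 : ℕ)) ω₂) w' = w := fun n w hw => by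
    have e : -(n : ℝ) + -1 = -((n + 1 : ℕ) : ℝ) := by push_cast; ring
    rwa [← hA.pullbackImage_eq hθ₁ hθ₂ zero_le_one, pullbackImage, hθ₁.apply_apply_eq e,
      hθ₂.apply_apply_eq e] at hw
  choose! f hfA hf using step
  let z : ℕ → X := fun n => Nat.rec y (fun n w => f n w) n
  have hzA : ∀ n : ℕ, z n ∈ A (θ₁ (-n) ω₁) (θ₂ (-n) ω₂) := fun n => by
    induction n with
    | zero => simpa [z, hθ₁.1, hθ₂.1] using hy
    | succ n ih => exact hfA n _ ih
  refine ⟨z, rfl, hzA, fun n k => ?_⟩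
  induction k with
  | zero => simpa using hΦ.map_zero _ _ (z n)
  | succ k ih =>
    have e : -((n + k + 1 : ℕ) : ℝ) + 1 = -((n + k : ℕ) : ℝ) := by push_cast; ring
    show Φ ((k + 1 : ℕ) : ℝ) (θ₁ (-((n + k + 1 : ℕ) : ℝ)) ω₁) (θ₂ (-((n + k + 1 : ℕ) : ℝ)) ω₂)
      (f (n + k) (z (n + k))) = z n
    rw [Nat.cast_succ, hΦ.cocycle _ _ k.cast_nonneg zero_le_one, hθ₁.apply_apply_eq e,
      hθ₂.apply_apply_eq e, hf _ _ (hzA _), ih]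

theorem Invariant.exists_orbit_through (hθ₁ : IsGroupAction θ₁) (hθ₂ : IsGroupAction θ₂)
    (hΦ : IsCocycle θ₁ θ₂ Φ) (hA : Invariant θ₁ θ₂ Φ A) {y : X} (hy : y ∈ A ω₁ ω₂) :
    ∃ γ : ℝ → X, γ 0 = y ∧ (∀ τ, γ τ ∈ A (θ₁ τ ω₁) (θ₂ τ ω₂)) ∧
      ∀ t τ, 0 ≤ t → Φ t (θ₁ τ ω₁) (θ₂ τ ω₂) (γ τ) = γ (t + τ) := by
  obtain ⟨z, hz0, hzA, hz⟩ := hA.exists_backward_seq hθ₁ hθ₂ hΦ hy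
  -- `γ τ` is the image at time `τ` of any backward point `z m` with `m ≥ -τ`.
  let g : ℝ → ℕ → X := fun τ m => Φ (τ + m) (θ₁ (-m) ω₁) (θ₂ (-m) ω₂) (z m)
  have hg_add : ∀ (τ : ℝ) (m k : ℕ), 0 ≤ τ + m → g τ (m + k) = g τ m := fun τ m k hτ => by
    have e : -((m + k : ℕ) : ℝ) + k = -(m : ℝ) := by push_cast; ring
    simp only [g]
    rw [show τ + ((m + k : ℕ) : ℝ) = τ + m + k by push_cast; ring,
      hΦ.cocycle _ _ hτ k.cast_nonneg, hθ₁.apply_apply_eq e, hθ₂.apply_apply_eq e, hz]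
  have hg : ∀ (τ : ℝ) (m m' : ℕ), 0 ≤ τ + m → 0 ≤ τ + m' → g τ m = g τ m' := fun τ m m' h h' => by
    rw [← hg_add τ m (max m m' - m) h, ← hg_add τ m' (max m m' - m') h',
      Nat.add_sub_cancel' (le_max_left _ _), Nat.add_sub_cancel' (le_max_right _ _)]
  let N : ℝ → ℕ := fun τ => ⌈-τ⌉₊
  have hN : ∀ τ : ℝ, 0 ≤ τ + N τ := fun τ => by linarith [Nat.le_ceil (-τ)]
  have e : ∀ τ : ℝ, -(N τ : ℝ) + (τ + N τ) = τ := fun τ => by ring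
  refine ⟨fun τ => g τ (N τ), ?_, fun τ => ?_, fun t τ ht => ?_⟩
  · simp [g, N, hθ₁.1, hθ₂.1, hΦ.map_zero, hz0]
  · rw [← hθ₁.apply_apply_eq (e τ), ← hθ₂.apply_apply_eq (e τ), ← hA _ (hN τ)]
    exact mem_image_of_mem _ (hzA _)
  · show Φ t (θ₁ τ ω₁) (θ₂ τ ω₂) (g τ (N τ)) = g (t + τ) (N (t + τ))
    rw [hg (t + τ) (N (t + τ)) (N τ) (hN _) (by linarith [hN τ])]
    simp only [g]
    rw [add_assoc, hΦ.cocycle t _ ht (hN τ), hθ₁.apply_apply_eq (e τ), hθ₂.apply_apply_eq (e τ)]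

theorem Invariant.exists_isDCompleteOrbit (hθ₁ : IsGroupAction θ₁) (hθ₂ : IsGroupAction θ₂)
    (hΦ : IsCocycle θ₁ θ₂ Φ) (hA : Invariant θ₁ θ₂ Φ A) (hA𝒟 : A ∈ 𝒟)
    (hne : ∀ a b, (A a b).Nonempty) {x : X} (hx : x ∈ A ω₁ ω₂) :
    ∃ ψ : ℝ → Ω₁ → Ω₂ → X, IsDCompleteOrbit θ₁ θ₂ Φ 𝒟 ψ ∧ ψ 0 ω₁ ω₂ = x := by
  classical
  -- `ψ` lives on every fibre, so it needs a base point in every `A a b`.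
  have base : ∀ a b, ∃ y ∈ A a b, a = ω₁ → b = ω₂ → y = x := fun a b =>
    if h : a = ω₁ ∧ b = ω₂ then ⟨x, h.1 ▸ h.2 ▸ hx, fun _ _ => rfl⟩
    else ⟨_, (hne a b).some_mem, fun ha hb => absurd ⟨ha, hb⟩ h⟩
  choose y hyA hyx using base
  choose γ hγ0 hγA hγ using fun a b => hA.exists_orbit_through hθ₁ hθ₂ hΦ (hyA a b)
  exact ⟨fun t a b => γ a b t, ⟨fun t τ ht a b => hγ a b t τ ht, A, hA𝒟, fun t a b => hγA a b t⟩,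
    (hγ0 ω₁ ω₂).trans (hyx _ _ rfl rfl)⟩

end Cocycle

section Attractor

variable [MetricSpace X] [MeasurableSpace Ω₂] {P : Measure Ω₂}
  {θ₁ : ℝ → Ω₁ → Ω₁} {θ₂ : ℝ → Ω₂ → Ω₂} {Φ : ℝ → Ω₁ → Ω₂ → X → X}
  {𝒟 : Set (Ω₁ → Ω₂ → Set X)} {A A' B : Ω₁ → Ω₂ → Set X} {ω₁ : Ω₁} {ω₂ : Ω₂}

theorem IsPullbackAttractor.omegaLimit_subset (hA : IsPullbackAttractor θ₁ θ₂ Φ P 𝒟 A)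
    (hB : B ∈ 𝒟) : omegaLimit θ₁ θ₂ Φ B ω₁ ω₂ ⊆ A ω₁ ω₂ :=
  (hA.attracts B hB).omegaLimit_subset (hA.compact ω₁ ω₂).isClosed

theorem IsPullbackAttractor.subset (hθ₁ : IsGroupAction θ₁) (hθ₂ : IsGroupAction θ₂)
    (hA : IsPullbackAttractor θ₁ θ₂ Φ P 𝒟 A) (hA' : IsPullbackAttractor θ₁ θ₂ Φ P 𝒟 A') :
    A' ω₁ ω₂ ⊆ A ω₁ ω₂ :=
  (hA'.invariant.subset_omegaLimit hθ₁ hθ₂).trans (hA.omegaLimit_subset hA'.mem)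

theorem IsPullbackAttractor.mem_of_isDCompleteOrbit (hA : IsPullbackAttractor θ₁ θ₂ Φ P 𝒟 A)
    {ψ : ℝ → Ω₁ → Ω₂ → X} (hψ : IsDCompleteOrbit θ₁ θ₂ Φ 𝒟 ψ) : ψ 0 ω₁ ω₂ ∈ A ω₁ ω₂ := by
  obtain ⟨horb, D, hD, hψD⟩ := hψ
  refine hA.omegaLimit_subset hD
    (subset_omegaLimit_of_forall_subset (fun t ht => ?_) (mem_singleton (ψ 0 ω₁ ω₂)))
  rw [singleton_subset_iff, pullbackImage]
  refine ⟨ψ (-t) ω₁ ω₂, hψD (-t) ω₁ ω₂, ?_⟩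
  rw [horb t (-t) ht, add_neg_cancel]

theorem IsPullbackAttractor.asymptoticallyCompact (hA : IsPullbackAttractor θ₁ θ₂ Φ P 𝒟 A) :
    AsymptoticallyCompact θ₁ θ₂ Φ 𝒟 := by
  intro ω₁ ω₂ B hB t x ht hx
  have hdist : Tendsto (fun n => infEDist (Φ (t n) (θ₁ (-t n) ω₁) (θ₂ (-t n) ω₂) (x n))
      (A ω₁ ω₂)) atTop (𝓝 0) :=
    tendsto_of_tendsto_of_tendsto_of_le_of_le tendsto_const_nhds
      ((hA.attracts B hB ω₁ ω₂).comp ht) (fun _ => zero_le)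
      (fun n => le_hausSemidist (mem_image_of_mem _ (hx n)))
  obtain ⟨a, -, φ, hφ, hconv⟩ :=
    exists_subseq_tendsto_of_infEDist_tendsto_zero (hA.compact ω₁ ω₂) hdist
  exact ⟨φ, a, hφ, hconv⟩

end Attractor

section Construction

variable [MetricSpace X] [MeasurableSpace X] [BorelSpace X]
  [MeasurableSpace Ω₂] {P : Measure Ω₂}
  {θ₁ : ℝ → Ω₁ → Ω₁} {θ₂ : ℝ → Ω₂ → Ω₂} {Φ : ℝ → Ω₁ → Ω₂ → X → X}
  {𝒟 : Set (Ω₁ → Ω₂ → Set X)} {A K : Ω₁ → Ω₂ → Set X}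

theorem Invariant.nullMeasurable_infDist (hθ₁ : IsGroupAction θ₁) (hθ₂ : IsGroupAction θ₂)
    (hθ₂pres : ∀ t : ℝ, MeasurePreserving (θ₂ t) P P) (hΦ : IsCocycle θ₁ θ₂ Φ)
    (hA : Invariant θ₁ θ₂ Φ A) {s : Set X} (hs : s.Countable) {η : ℝ}
    (hKne : ∀ a b, (K a b).Nonempty)
    (hKm : ∀ (ω₁ : Ω₁) (u : X), NullMeasurable (fun ω₂ => infDist u (K ω₁ ω₂)) P)
    (hsub : ∀ a b, A a b ⊆ denseThickening s η K a b)
    (hatt : Attracts θ₁ θ₂ Φ (denseThickening s η K) A)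
    (ω₁ : Ω₁) (x : X) : NullMeasurable (fun ω₂ => infDist x (A ω₁ ω₂)) P := by
  have hmeas : ∀ n : ℕ, NullMeasurable
      (fun ω₂ => infEDist x (pullbackImage θ₁ θ₂ Φ (denseThickening s η K) n ω₁ ω₂)) P := fun n =>
    nullMeasurable_infEDist_image_closure_inter_thickening hs (fun _ => hKne _ _)
      (fun u _ => (hKm _ u).comp_quasiMeasurePreserving (hθ₂pres _).quasiMeasurePreserving)
      (fun _ => hΦ.continuous _ n.cast_nonneg _ _)
      (fun u _ =>
        ((hΦ.measurable_apply n.cast_nonneg _ u).comp (hθ₂pres _).measurable).nullMeasurable)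
      x
  have hlim : ∀ ω₂, Tendsto
      (fun n : ℕ => infEDist x (pullbackImage θ₁ θ₂ Φ (denseThickening s η K) n ω₁ ω₂))
      atTop (𝓝 (infEDist x (A ω₁ ω₂))) := fun ω₂ =>
    tendsto_infEDist_of_tendsto_hausSemidist
      (fun n => (hA.pullbackImage_eq hθ₁ hθ₂ n.cast_nonneg ω₁ ω₂).symm.subset.trans
        (image_mono (hsub _ _)))
      ((hatt ω₁ ω₂).comp tendsto_natCast_atTop_atTop) x
  exact ENNReal.measurable_toReal.comp_nullMeasurable
    (measurable_of_tendsto_metrizable (fun n => (hmeas n).measurable') (tendsto_pi_nhds.2 hlim))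

theorem AsymptoticallyCompact.exists_isPullbackAttractor [SecondCountableTopology X]
    (hAC : AsymptoticallyCompact θ₁ θ₂ Φ 𝒟) (hθ₁ : IsGroupAction θ₁) (hθ₂ : IsGroupAction θ₂)
    (hθ₂pres : ∀ t : ℝ, MeasurePreserving (θ₂ t) P P) (hΦ : IsCocycle θ₁ θ₂ Φ)
    (h𝒟ne : FamiliesOfNonemptySets 𝒟) (h𝒟nc : NeighborhoodClosed 𝒟)
    (hK : IsClosedMeasurableAbsorbingSet θ₁ θ₂ Φ P 𝒟 K) :
    ∃ A, IsPullbackAttractor θ₁ θ₂ Φ P 𝒟 A := by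
  obtain ⟨⟨hK𝒟, hKabs⟩, hKne, hKm⟩ := hK
  obtain ⟨s, hsc, hsd⟩ := TopologicalSpace.exists_countable_dense X
  obtain ⟨η, hη, h𝒟η⟩ := h𝒟nc.exists_denseThickening_mem hK𝒟 s
  set K' := denseThickening s η K
  have hKK' := subset_denseThickening hsd hη K
  have hK' : IsAbsorbingSet θ₁ θ₂ Φ 𝒟 K' :=
    ⟨h𝒟η K' fun a b => ⟨(hKne a b).2.mono (hKK' a b), subset_rfl⟩, fun ω₁ ω₂ B hB =>
      let ⟨T, hT, h⟩ := hKabs ω₁ ω₂ B hB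
      ⟨T, hT, fun t ht => (h t ht).trans (hKK' _ _)⟩⟩
  have hsub : ∀ a b, omegaLimit θ₁ θ₂ Φ K' a b ⊆ K' a b := fun a b =>
    omegaLimit_subset_of_eventually_subset isClosed_closure (hK'.eventually_subset hK'.1 a b)
  have hinv := hAC.invariant_omegaLimit hθ₁ hθ₂ hΦ hK'.1
  have hatt : ∀ B ∈ 𝒟, Attracts θ₁ θ₂ Φ B (omegaLimit θ₁ θ₂ Φ K') := fun B hB =>
    hAC.attracts_omegaLimit hθ₁ hθ₂ hΦ hK' hB
  exact ⟨omegaLimit θ₁ θ₂ Φ K',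
    h𝒟η _ fun a b => ⟨hAC.omegaLimit_nonempty h𝒟ne hK'.1, hsub a b⟩,
    fun a b => hAC.isCompact_omegaLimit hK'.1,
    hinv.nullMeasurable_infDist hθ₁ hθ₂ hθ₂pres hΦ hsc (fun a b => (hKne a b).2) hKm hsub
      (hatt K' hK'.1),
    hinv, hatt⟩

theorem IsPullbackAttractor.exists_closedMeasurableAbsorbingSet [SecondCountableTopology X]
    (h𝒟ne : FamiliesOfNonemptySets 𝒟) (h𝒟nc : NeighborhoodClosed 𝒟)
    (hA : IsPullbackAttractor θ₁ θ₂ Φ P 𝒟 A) :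
    ∃ K, IsClosedMeasurableAbsorbingSet θ₁ θ₂ Φ P 𝒟 K := by
  obtain ⟨s, hsc, hsd⟩ := TopologicalSpace.exists_countable_dense X
  obtain ⟨η, hη, h𝒟η⟩ := h𝒟nc.exists_denseThickening_mem hA.mem s
  have hAne := h𝒟ne A hA.mem
  have hAK := cthickening_subset_denseThickening hsd (half_pos hη).le (half_lt_self hη) A
  have hKne : ∀ a b, (denseThickening s η A a b).Nonempty := fun a b =>
    (hAne a b).mono (subset_denseThickening hsd hη A a b)
  refine ⟨denseThickening s η A, ⟨h𝒟η _ fun a b => ⟨hKne a b, subset_rfl⟩, fun ω₁ ω₂ B hB => ?_⟩,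
    fun a b => ⟨isClosed_closure, hKne a b⟩, fun ω₁ x => ?_⟩
  · obtain ⟨T, hT⟩ := eventually_atTop.1
      ((hA.attracts B hB).eventually_subset_cthickening (half_pos hη) (ω₁ := ω₁) (ω₂ := ω₂))
    exact ⟨max T 1, lt_max_of_lt_right one_pos,
      fun t ht => (hT t (le_of_max_le_left ht)).trans (hAK ω₁ ω₂)⟩
  · have h := nullMeasurable_infEDist_image_closure_inter_thickening (f := fun _ => id) (η := η)
      hsc (hAne ω₁) (fun u _ => hA.measurable ω₁ u) (fun _ => continuous_id)
      (fun _ _ => measurable_const.nullMeasurable) x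
    simp only [image_id] at h
    exact ENNReal.measurable_toReal.comp_nullMeasurable h

end Construction

theorem attractor_existence_iff_general
    {Ω₁ Ω₂ X : Type*}
    [MetricSpace X] [SecondCountableTopology X]
    [MeasurableSpace X] [BorelSpace X]
    [MeasurableSpace Ω₂] (P : Measure Ω₂)
    (θ₁ : ℝ → Ω₁ → Ω₁) (θ₂ : ℝ → Ω₂ → Ω₂)
    (hθ₁ : IsGroupAction θ₁) (hθ₂ : IsGroupAction θ₂)
    (hθ₂pres : ∀ t : ℝ, MeasurePreserving (θ₂ t) P P)
    (Φ : ℝ → Ω₁ → Ω₂ → X → X)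
    (hΦ : IsCocycle θ₁ θ₂ Φ)
    (𝒟 : Set (Ω₁ → Ω₂ → Set X))
    (h𝒟ne : FamiliesOfNonemptySets 𝒟)
    (h𝒟nc : NeighborhoodClosed 𝒟) :
    ((∃ A : Ω₁ → Ω₂ → Set X, IsPullbackAttractor θ₁ θ₂ Φ P 𝒟 A) ↔
      (AsymptoticallyCompact θ₁ θ₂ Φ 𝒟 ∧
        ∃ K : Ω₁ → Ω₂ → Set X, IsClosedMeasurableAbsorbingSet θ₁ θ₂ Φ P 𝒟 K)) ∧
    (∀ A A' : Ω₁ → Ω₂ → Set X, IsPullbackAttractor θ₁ θ₂ Φ P 𝒟 A →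
      IsPullbackAttractor θ₁ θ₂ Φ P 𝒟 A' → A = A') ∧
    (∀ A K : Ω₁ → Ω₂ → Set X, IsPullbackAttractor θ₁ θ₂ Φ P 𝒟 A →
      IsClosedMeasurableAbsorbingSet θ₁ θ₂ Φ P 𝒟 K →
      ∀ (ω₁ : Ω₁) (ω₂ : Ω₂),
        A ω₁ ω₂ = omegaLimit θ₁ θ₂ Φ K ω₁ ω₂ ∧
        A ω₁ ω₂ = ⋃ B ∈ 𝒟, omegaLimit θ₁ θ₂ Φ B ω₁ ω₂ ∧
        A ω₁ ω₂ = {x : X | ∃ ψ : ℝ → Ω₁ → Ω₂ → X,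
          IsDCompleteOrbit θ₁ θ₂ Φ 𝒟 ψ ∧ ψ 0 ω₁ ω₂ = x}) := by
  refine ⟨⟨fun ⟨A, hA⟩ => ⟨hA.asymptoticallyCompact,
      hA.exists_closedMeasurableAbsorbingSet h𝒟ne h𝒟nc⟩,
    fun ⟨hAC, K, hK⟩ => hAC.exists_isPullbackAttractor hθ₁ hθ₂ hθ₂pres hΦ h𝒟ne h𝒟nc hK⟩,
    fun A A' hA hA' => ?_, fun A K hA hK ω₁ ω₂ => ⟨?_, ?_, ?_⟩⟩
  · funext ω₁ ω₂
    exact (hA'.subset hθ₁ hθ₂ hA).antisymm (hA.subset hθ₁ hθ₂ hA')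
  · exact (hA.invariant.subset_omegaLimit_of_absorbing hθ₁ hθ₂ hΦ hA.mem hK.1).antisymm
      (hA.omegaLimit_subset hK.1.1)
  · refine Subset.antisymm (fun y hy => ?_) (iUnion₂_subset fun B hB => hA.omegaLimit_subset hB)
    exact mem_biUnion hA.mem (hA.invariant.subset_omegaLimit hθ₁ hθ₂ hy)
  · ext x
    exact ⟨fun hx => hA.invariant.exists_isDCompleteOrbit hθ₁ hθ₂ hΦ hA.mem (h𝒟ne A hA.mem) hx,
      fun ⟨ψ, hψ, hψx⟩ => hψx ▸ hA.mem_of_isDCompleteOrbit hψ⟩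

theorem attractor_existence_iff
    {Ω₁ Ω₂ X : Type*} [Nonempty Ω₁]
    [MetricSpace X] [CompleteSpace X] [SecondCountableTopology X]
    [MeasurableSpace X] [BorelSpace X]
    [MeasurableSpace Ω₂] (P : Measure Ω₂) [IsProbabilityMeasure P]
    (θ₁ : ℝ → Ω₁ → Ω₁) (θ₂ : ℝ → Ω₂ → Ω₂)
    (hθ₁ : IsGroupAction θ₁) (hθ₂ : IsGroupAction θ₂)
    (hθ₂meas : Measurable fun p : ℝ × Ω₂ => θ₂ p.1 p.2)
    (hθ₂pres : ∀ t : ℝ, MeasurePreserving (θ₂ t) P P)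
    (Φ : ℝ → Ω₁ → Ω₂ → X → X)
    (hΦ : IsCocycle θ₁ θ₂ Φ)
    (𝒟 : Set (Ω₁ → Ω₂ → Set X))
    (h𝒟ne : FamiliesOfNonemptySets 𝒟)
    (h𝒟nc : NeighborhoodClosed 𝒟) :
    ((∃ A : Ω₁ → Ω₂ → Set X, IsPullbackAttractor θ₁ θ₂ Φ P 𝒟 A) ↔
      (AsymptoticallyCompact θ₁ θ₂ Φ 𝒟 ∧
        ∃ K : Ω₁ → Ω₂ → Set X, IsClosedMeasurableAbsorbingSet θ₁ θ₂ Φ P 𝒟 K)) ∧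
    (∀ A A' : Ω₁ → Ω₂ → Set X, IsPullbackAttractor θ₁ θ₂ Φ P 𝒟 A →
      IsPullbackAttractor θ₁ θ₂ Φ P 𝒟 A' → A = A') ∧
    (∀ A K : Ω₁ → Ω₂ → Set X, IsPullbackAttractor θ₁ θ₂ Φ P 𝒟 A →
      IsClosedMeasurableAbsorbingSet θ₁ θ₂ Φ P 𝒟 K →
      ∀ (ω₁ : Ω₁) (ω₂ : Ω₂),
        A ω₁ ω₂ = omegaLimit θ₁ θ₂ Φ K ω₁ ω₂ ∧
        A ω₁ ω₂ = ⋃ B ∈ 𝒟, omegaLimit θ₁ θ₂ Φ B ω₁ ω₂ ∧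
        A ω₁ ω₂ = {x : X | ∃ ψ : ℝ → Ω₁ → Ω₂ → X,
          IsDCompleteOrbit θ₁ θ₂ Φ 𝒟 ψ ∧ ψ 0 ω₁ ω₂ = x}) :=
  attractor_existence_iff_general P θ₁ θ₂ hθ₁ hθ₂ hθ₂pres Φ hΦ 𝒟 h𝒟ne h𝒟nc

end RDS
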